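/- Let G = (V, E, w) be a weighted digraph, let π = (v₀, v₁, …, v_q) be a shortest path in G, and let x ∈ V be a vertex from which at least one vertex of π is reachable. Let ρ = min_{0≤i≤q} d_G(x, v_i), and for R ≥ 0 let S(R) = {i ∈ {0, …, q} : d_G(x, v_i) ≤ R}. Then the set {R ≥ ρ : S(R) is upward closed in {0, …, q}} is nonempty and attains a minimum η, and for m = min S(η) it holds that η − ρ ≤ d_G(v_m, v_q). -/

import Mathlib

open scoped ENNReal BigOperators

/-- A weighted digraph: edges `E` with no self-loops and positive real weights. -/
structure WDigraph (V : Type) where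
  E : V → V → Prop
  no_self : ∀ v : V, ¬ E v v
  w : V → V → ℝ
  w_pos : ∀ u v : V, E u v → 0 < w u v

namespace WDigraph

variable {V : Type}

/-- `PathW G u v c`: there is a directed path from `u` to `v` in `G` of total weight `c`. -/
inductive PathW (G : WDigraph V) : V → V → ℝ → Prop
  | nil (u : V) : PathW G u u 0
  | cons {u x v : V} {c : ℝ} : G.E u x → PathW G x v c → PathW G u v (G.w u x + c)

/-- `u ⇝_G v`: there is a directed path from `u` to `v`. -/
def Reach (G : WDigraph V) (u v : V) : Prop := Relation.ReflTransGen G.E u v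

/-- The shortest-path quasimetric: infimum of path weights, `∞` if no path exists. -/
noncomputable def dist (G : WDigraph V) (u v : V) : ℝ≥0∞ :=
  ⨅ (c : ℝ) (_ : G.PathW u v c), ENNReal.ofReal c

/-- A DAG: no vertex has a nonempty directed path to itself. -/
def IsDAG (G : WDigraph V) : Prop := ∀ v : V, ¬ Relation.TransGen G.E v v

/-- Number of edges of the digraph. -/
noncomputable def edgeCount (G : WDigraph V) : ℕ := Nat.card {p : V × V // G.E p.1 p.2}

end WDigraph

/-!
Write `f i = d_G(x, v_i)` and `ℓ(a, b)` for the length of `π` from `v_a` to `v_b`; the triangle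
inequality along `π` gives `f b ≤ f a + ℓ(a, b)` for `a ≤ b`. The least threshold `η` is the
maximum of `f` on `[m, q]`, attained at some `j`. If a minimiser `i₀` of `f` lies at or before `j`,
then `η = f j ≤ f i₀ + ℓ(i₀, j) ≤ ρ + ℓ(m, q)`. Otherwise the final segment `[j + 1, q]` has the
same minimum `ρ`, and by induction its threshold satisfies `η' ≤ ρ + ℓ(m', q)` with `m' > j`.
Either `η ≤ η'`, or minimality of `η` forces some `i ∈ [m, j]` with `f i ≤ η'`, whence
`η = f j ≤ η' + ℓ(m, j) ≤ ρ + ℓ(m, q)`.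
-/

open Finset

namespace WDigraph

variable {V : Type}

theorem PathW.append {G : WDigraph V} {u v w : V} {c c' : ℝ}
    (h : G.PathW u v c) (h' : G.PathW v w c') : G.PathW u w (c + c') := by
  induction h with
  | nil u => simpa using h'
  | cons e _ ih => rw [add_assoc]; exact .cons e (ih h')

theorem dist_triangle (G : WDigraph V) (u v w : V) :
    G.dist u w ≤ G.dist u v + G.dist v w := by
  simp only [dist, ENNReal.iInf_add, ENNReal.add_iInf]
  refine le_iInf₂ fun b hb => le_iInf₂ fun a ha => ?_
  calc G.dist u w ≤ ENNReal.ofReal (a + b) := iInf₂_le _ (ha.append hb)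
    _ ≤ ENNReal.ofReal a + ENNReal.ofReal b := ENNReal.ofReal_add_le

end WDigraph

section UpClosedThreshold

variable (f : ℕ → ℝ≥0∞) (t q : ℕ)

/-- For `f i = d_G(x, v_i)` and `t = 0`, the `R ≥ ρ` for which `S(R)` is upward closed. -/
def upClosedThresholds : Set ℝ≥0∞ :=
  {R | (⨅ i ∈ Icc t q, f i) ≤ R ∧
    ∀ i, t ≤ i → i ≤ q → f i ≤ R → ∀ j, i ≤ j → j ≤ q → f j ≤ R}

noncomputable def leastThreshold : ℝ≥0∞ := sInf (upClosedThresholds f t q)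

noncomputable def firstIndexBelow (R : ℝ≥0∞) : ℕ := sInf {i | t ≤ i ∧ i ≤ q ∧ f i ≤ R}

theorem isLeast_leastThreshold : IsLeast (upClosedThresholds f t q) (leastThreshold f t q) := by
  refine ⟨⟨le_sInf fun R hR => hR.1, fun i hti hiq hi j hij hjq => ?_⟩, fun R hR => sInf_le hR⟩
  refine le_of_forall_gt fun R hR => ?_
  obtain ⟨R', hR', hR'R⟩ := sInf_lt_iff.mp hR
  exact (hR'.2 i hti hiq (hi.trans (sInf_le hR')) j hij hjq).trans_lt hR'R

variable {f t q}

theorem exists_eq_iInf_Icc (htq : t ≤ q) : ∃ i, t ≤ i ∧ i ≤ q ∧ f i = ⨅ j ∈ Icc t q, f j := by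
  obtain ⟨i, hi, h⟩ := exists_mem_eq_inf (Icc t q) (nonempty_Icc.mpr htq) f
  rw [Finset.inf_eq_iInf] at h
  exact ⟨i, (mem_Icc.mp hi).1, (mem_Icc.mp hi).2, h.symm⟩

theorem firstIndexBelow_le {R : ℝ≥0∞} {i : ℕ} (hti : t ≤ i) (hiq : i ≤ q) (hi : f i ≤ R) :
    firstIndexBelow f t q R ≤ i :=
  Nat.sInf_le ⟨hti, hiq, hi⟩

theorem firstIndexBelow_mem {R : ℝ≥0∞} (htq : t ≤ q) (hR : (⨅ i ∈ Icc t q, f i) ≤ R) :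
    t ≤ firstIndexBelow f t q R ∧ firstIndexBelow f t q R ≤ q ∧
      f (firstIndexBelow f t q R) ≤ R := by
  obtain ⟨i, hti, hiq, hi⟩ := exists_eq_iInf_Icc (f := f) htq
  have hne : {i | t ≤ i ∧ i ≤ q ∧ f i ≤ R}.Nonempty := ⟨i, hti, hiq, hi ▸ hR⟩
  exact Nat.sInf_mem hne

theorem le_leastThreshold_of_firstIndexBelow_le (htq : t ≤ q) {j : ℕ}
    (hj : firstIndexBelow f t q (leastThreshold f t q) ≤ j) (hjq : j ≤ q) :
    f j ≤ leastThreshold f t q := by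
  obtain ⟨htm, hmq, hm⟩ := firstIndexBelow_mem htq (isLeast_leastThreshold f t q).1.1
  exact (isLeast_leastThreshold f t q).1.2 _ htm hmq hm j hj hjq

theorem exists_eq_leastThreshold (htq : t ≤ q) :
    ∃ j, firstIndexBelow f t q (leastThreshold f t q) ≤ j ∧ j ≤ q ∧
      f j = leastThreshold f t q := by
  set η := leastThreshold f t q
  set m := firstIndexBelow f t q η
  have hm := firstIndexBelow_mem htq (isLeast_leastThreshold f t q).1.1
  set B := (Icc m q).sup f
  have hBη : B ≤ η := Finset.sup_le fun j hj =>
    le_leastThreshold_of_firstIndexBelow_le htq (mem_Icc.mp hj).1 (mem_Icc.mp hj).2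
  have hB : B ∈ upClosedThresholds f t q := by
    obtain ⟨i, hti, hiq, hi⟩ := exists_eq_iInf_Icc (f := f) htq
    refine ⟨hi ▸ le_sup (mem_Icc.mpr ⟨?_, hiq⟩), fun i hti hiq hi j hij hjq => ?_⟩
    · exact firstIndexBelow_le hti hiq (hi ▸ (isLeast_leastThreshold f t q).1.1)
    · exact le_sup (mem_Icc.mpr ⟨(firstIndexBelow_le hti hiq (hi.trans hBη)).trans hij, hjq⟩)
  obtain ⟨j, hj, hjB⟩ := exists_mem_eq_sup (Icc m q) (nonempty_Icc.mpr hm.2.1) f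
  exact ⟨j, (mem_Icc.mp hj).1, (mem_Icc.mp hj).2,
    hjB ▸ le_antisymm hBη ((isLeast_leastThreshold f t q).2 hB)⟩

/-- If neither holds, `leastThreshold f s q` is a threshold on `[t, q]` below
`leastThreshold f t q`. -/
theorem leastThreshold_le_or_exists {s : ℕ}
    (hmin : (⨅ i ∈ Icc s q, f i) = ⨅ i ∈ Icc t q, f i) :
    leastThreshold f t q ≤ leastThreshold f s q ∨
      ∃ i, firstIndexBelow f t q (leastThreshold f t q) ≤ i ∧ i < s ∧
        f i ≤ leastThreshold f s q := by
  by_contra! h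
  obtain ⟨hlt, hno⟩ := h
  have hs := (isLeast_leastThreshold f s q).1
  refine hlt.not_ge ((isLeast_leastThreshold f t q).2 ⟨hmin ▸ hs.1, ?_⟩)
  intro i hti hiq hi j hij hjq
  have hmi := firstIndexBelow_le hti hiq (hi.trans hlt.le)
  exact hs.2 i (not_lt.mp fun his => (hno i hmi his).not_ge hi) hiq hi j hij hjq

end UpClosedThreshold

theorem leastThreshold_le_iInf_add_sum {f d : ℕ → ℝ≥0∞} {q : ℕ}
    (hf : ∀ a b, a ≤ b → b ≤ q → f b ≤ f a + ∑ i ∈ Ico a b, d i) {t : ℕ} (htq : t ≤ q) :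
    leastThreshold f t q ≤
      (⨅ i ∈ Icc t q, f i) + ∑ i ∈ Ico (firstIndexBelow f t q (leastThreshold f t q)) q, d i := by
  have hsum_mono : ∀ {a b a' b'}, a' ≤ a → b ≤ b' → ∑ i ∈ Ico a b, d i ≤ ∑ i ∈ Ico a' b', d i :=
    fun ha hb => sum_le_sum_of_subset (Ico_subset_Ico ha hb)
  obtain ⟨i₀, hti₀, hi₀q, hi₀⟩ := exists_eq_iInf_Icc (f := f) htq
  obtain ⟨j, hmj, hjq, hj⟩ := exists_eq_leastThreshold htq
  have hρη := (isLeast_leastThreshold f t q).1.1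
  have htm := (firstIndexBelow_mem htq hρη).1
  have hmi₀ := firstIndexBelow_le hti₀ hi₀q (hi₀.trans_le hρη)
  set ρ := ⨅ i ∈ Icc t q, f i
  set η := leastThreshold f t q
  set m := firstIndexBelow f t q η
  rcases le_or_gt i₀ j with hi₀j | hji₀
  · calc η = f j := hj.symm
      _ ≤ f i₀ + ∑ i ∈ Ico i₀ j, d i := hf i₀ j hi₀j hjq
      _ ≤ ρ + ∑ i ∈ Ico m q, d i := by rw [hi₀]; gcongr ρ + ?_; exact hsum_mono hmi₀ hjq
  -- the minimum is attained past `j`, so we recurse on the final segment `[j + 1, q]`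
  have hmin : (⨅ i ∈ Icc (j + 1) q, f i) = ρ := le_antisymm
    ((iInf₂_le i₀ (mem_Icc.mpr ⟨hji₀, hi₀q⟩)).trans_eq hi₀)
    (le_iInf₂ fun i hi => iInf₂_le i (mem_Icc.mpr ⟨by grind, (mem_Icc.mp hi).2⟩))
  have ih := leastThreshold_le_iInf_add_sum hf (by omega : j + 1 ≤ q)
  have hjm' := (firstIndexBelow_mem (by omega : j + 1 ≤ q)
    (isLeast_leastThreshold f (j + 1) q).1.1).1
  rw [hmin] at ih
  set m' := firstIndexBelow f (j + 1) q (leastThreshold f (j + 1) q)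
  rcases leastThreshold_le_or_exists hmin with hle | ⟨i, hmi, hij, hi⟩
  · exact hle.trans (ih.trans (by gcongr ρ + ?_; exact hsum_mono (by omega) le_rfl))
  calc η = f j := hj.symm
    _ ≤ f i + ∑ k ∈ Ico i j, d k := hf i j (by omega) hjq
    _ ≤ (ρ + ∑ k ∈ Ico m' q, d k) + ∑ k ∈ Ico m j, d k :=
        add_le_add (hi.trans ih) (hsum_mono hmi le_rfl)
    _ ≤ ρ + (∑ k ∈ Ico m j, d k + ∑ k ∈ Ico j q, d k) := by
        rw [add_assoc, add_comm (∑ k ∈ Ico m' q, d k)]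
        gcongr ρ + (_ + ?_)
        exact hsum_mono (by omega) le_rfl
    _ = ρ + ∑ k ∈ Ico m q, d k := by rw [sum_Ico_consecutive _ hmj hjq]
termination_by q - t

theorem eta_exists_and_close_to_rho_general {V : Type} (G : WDigraph V)
    (q : ℕ) (z : ℕ → V)
    (hedge : ∀ i, i < q → G.E (z i) (z (i + 1)))
    (hshort : ∀ a b : ℕ, a ≤ b → b ≤ q →
      G.dist (z a) (z b) = ENNReal.ofReal (∑ i ∈ Finset.Ico a b, G.w (z i) (z (i + 1))))
    (x : V) :
    ∃ η : ℝ≥0∞,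
      IsLeast {R : ℝ≥0∞ |
        (⨅ i ∈ Finset.Iic q, G.dist x (z i)) ≤ R ∧
        ∀ i, i ≤ q → G.dist x (z i) ≤ R →
          ∀ j, i ≤ j → j ≤ q → G.dist x (z j) ≤ R} η ∧
      η - (⨅ i ∈ Finset.Iic q, G.dist x (z i)) ≤
        G.dist (z (sInf {i : ℕ | i ≤ q ∧ G.dist x (z i) ≤ η})) (z q) := by
  set f := fun i => G.dist x (z i)
  have hpath : ∀ a b, a ≤ b → b ≤ q →
      G.dist (z a) (z b) = ∑ i ∈ Ico a b, ENNReal.ofReal (G.w (z i) (z (i + 1))) :=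
    fun a b hab hbq => (hshort a b hab hbq).trans <| ENNReal.ofReal_sum_of_nonneg fun i hi =>
      (G.w_pos _ _ (hedge i (by grind))).le
  have hf : ∀ a b, a ≤ b → b ≤ q →
      f b ≤ f a + ∑ i ∈ Ico a b, ENNReal.ofReal (G.w (z i) (z (i + 1))) :=
    fun a b hab hbq => hpath a b hab hbq ▸ G.dist_triangle x (z a) (z b)
  have hS : upClosedThresholds f 0 q = {R | (⨅ i ∈ Iic q, f i) ≤ R ∧
      ∀ i, i ≤ q → f i ≤ R → ∀ j, i ≤ j → j ≤ q → f j ≤ R} := by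
    ext R
    simp only [upClosedThresholds, zero_le, true_implies]
    rfl
  refine ⟨leastThreshold f 0 q, hS ▸ isLeast_leastThreshold f 0 q, ?_⟩
  have hbound := leastThreshold_le_iInf_add_sum hf (Nat.zero_le q)
  have hm := (firstIndexBelow_mem (Nat.zero_le q) (isLeast_leastThreshold f 0 q).1.1).2.1
  simp only [firstIndexBelow, zero_le, true_and] at hbound hm
  rwa [tsub_le_iff_left, hpath _ q hm le_rfl]

/-- for a shortest path `π = (v₀,…,v_q)` in `G` and a vertex `x` from which
some vertex of `π` is reachable, with `ρ = min_i d_G(x, v_i)` and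
`S(R) = {i : d_G(x,v_i) ≤ R}`, the set `{R ≥ ρ : S(R) is upward closed}` has a least
element `η`, and for `m = min S(η)` we have `η − ρ ≤ d_G(v_m, v_q)`. -/
theorem eta_exists_and_close_to_rho {V : Type} [Fintype V] (G : WDigraph V)
    (q : ℕ) (z : ℕ → V)
    (hedge : ∀ i, i < q → G.E (z i) (z (i + 1)))
    (hshort : ∀ a b : ℕ, a ≤ b → b ≤ q →
      G.dist (z a) (z b) = ENNReal.ofReal (∑ i ∈ Finset.Ico a b, G.w (z i) (z (i + 1))))
    (x : V) (hreach : ∃ i, i ≤ q ∧ G.Reach x (z i)) :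
    ∃ η : ℝ≥0∞,
      IsLeast {R : ℝ≥0∞ |
        (⨅ i ∈ Finset.Iic q, G.dist x (z i)) ≤ R ∧
        ∀ i, i ≤ q → G.dist x (z i) ≤ R →
          ∀ j, i ≤ j → j ≤ q → G.dist x (z j) ≤ R} η ∧
      η - (⨅ i ∈ Finset.Iic q, G.dist x (z i)) ≤
        G.dist (z (sInf {i : ℕ | i ≤ q ∧ G.dist x (z i) ≤ η})) (z q) :=
  eta_exists_and_close_to_rho_general G q z hedge hshort x
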